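/- arXiv:1802.04672 — 3 statements merged into one kernel-verified Lean document; each statement's English description precedes it below -/
import Mathlib

section
/- Let f be an entire function satisfying |f(z)| ≤ A·e^{σ|z|} for all z ∈ ℂ (for some A, σ > 0) and |f(x)| ≤ A/(1+x²) for all x ∈ ℝ. Then for every z = x + iy ∈ ℂ, |f(z)| ≤ A·e^{σ|y|}/(1+x²). -/
/-!
On the closed upper half-plane consider `g z = (z + i)² e^{iσz} f z`. Then
`|g x| = (1 + x²)|f x| ≤ A` on `ℝ`, `g` has exponential type, and `|g (iy)| ≤ A (1 + y)²` grows
subexponentially along `iℝ₊`. Phragmén–Lindelöf for `g(z) e^{iεz}` in the upper half-plane,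
followed by `ε → 0`, gives `|g| ≤ A` there, and `|z + i|² ≥ 1 + x²`. The lower half-plane is the
same statement for `z ↦ f (-z)`.
-/

open Complex Filter Set Asymptotics

section UpperHalfPlane

variable {E : Type*} [NormedAddCommGroup E] [NormedSpace ℂ E] {g : ℂ → E} {M : ℝ}

theorem PhragmenLindelof.upper_half_plane_le_mul_exp (hd : DiffContOnCl ℂ g {z | 0 < z.im})
    (hexp : ∃ B C, ∀ z : ℂ, 0 < z.im → ‖g z‖ ≤ C * Real.exp (B * ‖z‖))
    (hre : ∀ x : ℝ, ‖g x‖ ≤ M) {ε : ℝ} (hε : 0 ≤ ε)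
    (him : (fun y : ℝ => g (y * I)) =O[atTop] fun y => Real.exp (ε * y))
    {z : ℂ} (hz : 0 ≤ z.im) : ‖g z‖ ≤ M * Real.exp (ε * z.im) := by
  set h : ℂ → E := fun w => Complex.exp (-ε * w) • g (w * I)
  have norm_h : ∀ w, ‖h w‖ = Real.exp (-ε * w.re) * ‖g (w * I)‖ := fun w => by
    simp [h, norm_smul, Complex.norm_exp]
  have hrot : MapsTo (· * I) {w : ℂ | 0 < w.re} {z | 0 < z.im} := fun w hw => by simpa using hw
  have hh : ‖h (-(z * I))‖ ≤ M := by
    refine PhragmenLindelof.right_half_plane_of_bounded_on_real ?_ ?_ ?_ (fun x => ?_) (by simpa)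
    · exact (differentiable_id.const_mul _).cexp.diffContOnCl.smul
        (hd.comp (differentiable_id.mul_const I).diffContOnCl hrot)
    · obtain ⟨B, C, hC⟩ := hexp
      refine ⟨1, one_lt_two, B, IsBigO.of_bound C ?_⟩
      rw [eventually_inf_principal]
      refine Eventually.of_forall fun w (hw : 0 < w.re) => ?_
      calc ‖h w‖ ≤ ‖g (w * I)‖ := by
            rw [norm_h]
            exact mul_le_of_le_one_left (norm_nonneg _) (Real.exp_le_one_iff.2 (by nlinarith))
        _ ≤ C * Real.exp (B * ‖w‖) := by simpa using hC _ (hrot hw)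
        _ = C * ‖Real.exp (B * ‖w‖ ^ (1 : ℝ))‖ := by simp
    · obtain ⟨K, hK⟩ := him.bound
      refine ⟨K, eventually_map.2 ?_⟩
      filter_upwards [hK] with y hy
      rw [Real.norm_of_nonneg (Real.exp_pos _).le] at hy
      rw [norm_h, ofReal_re, neg_mul, Real.exp_neg, inv_mul_le_iff₀ (Real.exp_pos _)]
      linarith
    · simpa [norm_h, mul_assoc] using hre (-x)
  have hzI : -(z * I) * I = z := by rw [neg_mul, mul_assoc, I_mul_I]; ring
  rw [norm_h, hzI, neg_re, mul_I_re, neg_neg, neg_mul, Real.exp_neg,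
    inv_mul_le_iff₀ (Real.exp_pos _)] at hh
  linarith

theorem PhragmenLindelof.upper_half_plane_of_subexponential_on_imag
    (hd : DiffContOnCl ℂ g {z | 0 < z.im})
    (hexp : ∃ B C, ∀ z : ℂ, 0 < z.im → ‖g z‖ ≤ C * Real.exp (B * ‖z‖))
    (hre : ∀ x : ℝ, ‖g x‖ ≤ M)
    (him : ∀ ε > 0, (fun y : ℝ => g (y * I)) =O[atTop] fun y => Real.exp (ε * y))
    {z : ℂ} (hz : 0 ≤ z.im) : ‖g z‖ ≤ M := by
  refine ge_of_tendsto ?_ (eventually_nhdsWithin_of_forall (s := Ioi (0 : ℝ)) (a := 0)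
    fun ε hε => upper_half_plane_le_mul_exp hd hexp hre (le_of_lt hε) (him ε hε) hz)
  exact (Continuous.tendsto' (by fun_prop) 0 M (by simp)).mono_left nhdsWithin_le_nhds

end UpperHalfPlane

lemma isBigO_add_const_pow_exp (c : ℝ) (n : ℕ) {ε : ℝ} (hε : 0 < ε) :
    (fun y : ℝ => (y + c) ^ n) =O[atTop] fun y => Real.exp (ε * y) := by
  refine ((isLittleO_pow_exp_pos_mul_atTop n hε).isBigO.comp_tendsto
    (tendsto_atTop_add_const_right _ c tendsto_id)).trans
    (IsBigO.of_bound (Real.exp (ε * c)) (Eventually.of_forall fun y => ?_))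
  simp [mul_add, Real.exp_add, mul_comm]

lemma Complex.sq_norm_add_I (z : ℂ) : ‖z + I‖ ^ 2 = z.re ^ 2 + (z.im + 1) ^ 2 := by
  rw [Complex.sq_norm, Complex.normSq_apply]
  simp only [add_re, add_im, I_re, I_im, add_zero]
  ring

lemma Complex.norm_exp_mul_I_mul (σ : ℝ) (z : ℂ) :
    ‖Complex.exp (σ * I * z)‖ = Real.exp (-σ * z.im) := by
  simp [Complex.norm_exp]

lemma Complex.sq_norm_add_I_mul_exp_le (σ : ℝ) (w : ℂ) :
    ‖w + I‖ ^ 2 * Real.exp (-σ * w.im) ≤ Real.exp ((2 + |σ|) * ‖w‖) := by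
  have hsq : ‖w + I‖ ^ 2 ≤ Real.exp (2 * ‖w‖) := calc
    ‖w + I‖ ^ 2 ≤ (‖w‖ + 1) ^ 2 := by
      gcongr
      simpa using norm_add_le w I
    _ ≤ Real.exp ‖w‖ ^ 2 := by gcongr; exact Real.add_one_le_exp _
    _ = Real.exp (2 * ‖w‖) := by rw [← Real.exp_nat_mul]; norm_num
  have hexp : Real.exp (-σ * w.im) ≤ Real.exp (|σ| * ‖w‖) := by
    refine Real.exp_le_exp.2 ?_
    calc -σ * w.im ≤ |σ| * |w.im| := by rw [neg_mul, ← abs_mul]; exact neg_le_abs _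
      _ ≤ |σ| * ‖w‖ := by gcongr; exact abs_im_le_norm w
  calc ‖w + I‖ ^ 2 * Real.exp (-σ * w.im)
      ≤ Real.exp (2 * ‖w‖) * Real.exp (|σ| * ‖w‖) := by gcongr
    _ = Real.exp ((2 + |σ|) * ‖w‖) := by rw [← Real.exp_add]; ring_nf

lemma norm_add_I_sq_mul_exp_mul (σ : ℝ) (f : ℂ → ℂ) (w : ℂ) :
    ‖(w + I) ^ 2 * Complex.exp (σ * I * w) * f w‖ =
      ‖w + I‖ ^ 2 * Real.exp (-σ * w.im) * ‖f w‖ := by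
  simp only [norm_mul, norm_pow, Complex.norm_exp_mul_I_mul]

section ModerateDecay

variable {f : ℂ → ℂ} {A σ : ℝ}

theorem norm_add_I_sq_mul_exp_mul_le_of_im_nonneg (hf : Differentiable ℂ f)
    (hgrowth : ∀ z : ℂ, ‖f z‖ ≤ A * Real.exp (σ * ‖z‖))
    (hreal : ∀ x : ℝ, ‖f x‖ ≤ A / (1 + x ^ 2)) {z : ℂ} (hz : 0 ≤ z.im) :
    ‖(z + I) ^ 2 * Complex.exp (σ * I * z) * f z‖ ≤ A := by
  set g : ℂ → ℂ := fun w => (w + I) ^ 2 * Complex.exp (σ * I * w) * f w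
  have norm_g : ∀ w, ‖g w‖ = ‖w + I‖ ^ 2 * Real.exp (-σ * w.im) * ‖f w‖ :=
    norm_add_I_sq_mul_exp_mul σ f
  refine PhragmenLindelof.upper_half_plane_of_subexponential_on_imag (g := g) ?_ ?_
    (fun x => ?_) ?_ hz
  · exact ((((differentiable_id.add_const I).pow 2).mul
      (differentiable_id.const_mul _).cexp).mul hf).diffContOnCl
  · refine ⟨2 + |σ| + σ, A, fun w _ => ?_⟩
    calc ‖g w‖ ≤ Real.exp ((2 + |σ|) * ‖w‖) * (A * Real.exp (σ * ‖w‖)) := by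
          rw [norm_g]
          exact mul_le_mul (Complex.sq_norm_add_I_mul_exp_le σ w) (hgrowth w)
            (norm_nonneg _) (Real.exp_pos _).le
      _ = A * Real.exp ((2 + |σ| + σ) * ‖w‖) := by
          rw [mul_left_comm, ← Real.exp_add]; ring_nf
  · have hx : (0 : ℝ) < 1 + x ^ 2 := by positivity
    rw [norm_g, Complex.sq_norm_add_I]
    simpa [add_comm (x ^ 2), ← le_div_iff₀' hx] using hreal x
  · intro ε hε
    refine (IsBigO.of_bound A ?_).trans (isBigO_add_const_pow_exp 1 2 hε)
    filter_upwards [eventually_ge_atTop 0] with y hy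
    have hfy : ‖f (y * I)‖ ≤ A * Real.exp (σ * y) := by
      simpa [abs_of_nonneg hy] using hgrowth (y * I)
    calc ‖g (y * I)‖ = (y + 1) ^ 2 * (Real.exp (-σ * y) * ‖f (y * I)‖) := by
          rw [norm_g, Complex.sq_norm_add_I]; simp [mul_assoc]
      _ ≤ (y + 1) ^ 2 * (Real.exp (-σ * y) * (A * Real.exp (σ * y))) := by gcongr
      _ = A * ‖(y + 1) ^ 2‖ := by
          have hexp : Real.exp (-σ * y) * Real.exp (σ * y) = 1 := by
            rw [← Real.exp_add]; simp
          rw [Real.norm_of_nonneg (by positivity)]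
          linear_combination (y + 1) ^ 2 * A * hexp

theorem norm_mul_one_add_sq_le_of_im_nonneg (hf : Differentiable ℂ f)
    (hgrowth : ∀ z : ℂ, ‖f z‖ ≤ A * Real.exp (σ * ‖z‖))
    (hreal : ∀ x : ℝ, ‖f x‖ ≤ A / (1 + x ^ 2)) {z : ℂ} (hz : 0 ≤ z.im) :
    ‖f z‖ * (1 + z.re ^ 2) ≤ A * Real.exp (σ * z.im) := by
  have hg := norm_add_I_sq_mul_exp_mul_le_of_im_nonneg hf hgrowth hreal hz
  have hz' : 1 + z.re ^ 2 ≤ ‖z + I‖ ^ 2 := by rw [Complex.sq_norm_add_I]; nlinarith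
  rw [norm_add_I_sq_mul_exp_mul, mul_right_comm, ← le_div_iff₀ (Real.exp_pos _), div_eq_mul_inv,
    ← Real.exp_neg, neg_mul, neg_neg] at hg
  calc ‖f z‖ * (1 + z.re ^ 2) ≤ ‖z + I‖ ^ 2 * ‖f z‖ := by rw [mul_comm]; gcongr
    _ ≤ A * Real.exp (σ * z.im) := hg

end ModerateDecay

theorem exp_type_moderate_decay_bound_general
    (f : ℂ → ℂ) (A σ : ℝ)
    (hf : Differentiable ℂ f)
    (hgrowth : ∀ z : ℂ, ‖f z‖ ≤ A * Real.exp (σ * ‖z‖))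
    (hreal : ∀ x : ℝ, ‖f (x : ℂ)‖ ≤ A / (1 + x ^ 2)) :
    ∀ z : ℂ, ‖f z‖ ≤ A * Real.exp (σ * |z.im|) / (1 + z.re ^ 2) := by
  intro z
  rw [le_div_iff₀ (by positivity)]
  rcases le_total 0 z.im with hz | hz
  · simpa [abs_of_nonneg hz] using norm_mul_one_add_sq_le_of_im_nonneg hf hgrowth hreal hz
  · have hf' : Differentiable ℂ (fun w => f (-w)) := hf.comp differentiable_neg
    have hgrowth' : ∀ w : ℂ, ‖f (-w)‖ ≤ A * Real.exp (σ * ‖w‖) := fun w => by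
      simpa using hgrowth (-w)
    have hreal' : ∀ x : ℝ, ‖f (-x)‖ ≤ A / (1 + x ^ 2) := fun x => by
      simpa using hreal (-x)
    simpa [abs_of_nonpos hz] using
      norm_mul_one_add_sq_le_of_im_nonneg hf' hgrowth' hreal' (z := -z) (by simpa using hz)

/-- Phragmén–Lindelöf bound: an entire function of exponential type `σ`
(with constant `A`) that has moderate decay `A/(1+x²)` on the real line satisfies
`|f(z)| ≤ A e^{σ|y|}/(1+x²)` everywhere on `ℂ`. -/
theorem exp_type_moderate_decay_bound
    (f : ℂ → ℂ) (A σ : ℝ) (hA : 0 < A) (hσ : 0 < σ)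
    (hf : Differentiable ℂ f)
    (hgrowth : ∀ z : ℂ, ‖f z‖ ≤ A * Real.exp (σ * ‖z‖))
    (hreal : ∀ x : ℝ, ‖f (x : ℂ)‖ ≤ A / (1 + x ^ 2)) :
    ∀ z : ℂ, ‖f z‖ ≤ A * Real.exp (σ * |z.im|) / (1 + z.re ^ 2) :=
  exp_type_moderate_decay_bound_general f A σ hf hgrowth hreal
end

section
/- Let f be an entire function, x ∈ ℝ, and suppose there exist A, σ > 0 such that |f^{(n)}(x)| ≤ A·σ^n for all n ≥ 1. Let α > Aσ and let R > 0 satisfy R < (1/σ)·log(1 + |α + f'(x)|/(Aσ)). Then the function g(z) = αz + f(z) is injective on the open disk D_R(x) = {z ∈ ℂ : |z − x| < R}. -/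
/-!
Write `g z = a z + (f z - f'(x) z)` with `a = α + f'(x)`. The Taylor expansion of `f'` at `x`,
majorised term by term by the exponential series, gives
`|f'(ζ) - f'(x)| ≤ Aσ (e^{σ|ζ - x|} - 1) < Aσ (e^{σR} - 1)` on the disk, and the bound on `R`
says exactly that `Aσ (e^{σR} - 1) < |a|`. So `g` differs from the injective linear map `z ↦ a z`
by a map that is Lipschitz with constant less than `|a|`, by the mean value inequality.
-/

open Real Set

theorem Real.hasSum_pow_succ_div_factorial (y : ℝ) :
    HasSum (fun n : ℕ => y ^ (n + 1) / (n + 1).factorial) (exp y - 1) := by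
  have hexp : HasSum (fun n : ℕ => y ^ n / n.factorial) (exp y) := by
    rw [exp_eq_exp_ℝ]
    exact NormedSpace.expSeries_div_hasSum_exp y
  simpa using (hasSum_nat_add_iff' 1).mpr hexp

theorem Real.mul_exp_mul_sub_one_lt_of_lt_log {b c σ R : ℝ} (hb : 0 < b) (hσ : 0 < σ)
    (hc : 0 ≤ c) (hR : R < 1 / σ * log (1 + c / b)) :
    b * (exp (σ * R) - 1) < c := by
  have hlog : σ * R < log (1 + c / b) := by
    rwa [one_div_mul_eq_div, lt_div_iff₀' hσ] at hR
  have hexp : exp (σ * R) < 1 + c / b := by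
    rwa [← exp_lt_exp, exp_log (by positivity)] at hlog
  calc b * (exp (σ * R) - 1) < b * (c / b) := by gcongr; linarith
    _ = c := mul_div_cancel₀ c hb.ne'

theorem Complex.norm_sub_le_of_norm_iteratedDeriv_le {E : Type*} [NormedAddCommGroup E]
    [NormedSpace ℂ E] [CompleteSpace E] {F : ℂ → E} (hF : Differentiable ℂ F) {c : ℂ} {M σ : ℝ}
    (hbound : ∀ n : ℕ, 1 ≤ n → ‖iteratedDeriv n F c‖ ≤ M * σ ^ n) (z : ℂ) :
    ‖F z - F c‖ ≤ M * (Real.exp (σ * ‖z - c‖) - 1) := by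
  set t : ℕ → E := fun n => (n.factorial : ℂ)⁻¹ • (z - c) ^ n • iteratedDeriv n F c
  have htaylor : HasSum (fun n => t (n + 1)) (F z - F c) := by
    simpa [t] using (hasSum_nat_add_iff' 1).mpr (hasSum_taylorSeries_of_entire hF c z)
  have hterm (n : ℕ) :
      ‖t (n + 1)‖ ≤ M * ((σ * ‖z - c‖) ^ (n + 1) / (n + 1).factorial) := by
    have hnorm : ‖t (n + 1)‖ =
        ‖z - c‖ ^ (n + 1) / (n + 1).factorial * ‖iteratedDeriv (n + 1) F c‖ := by
      simp only [t, norm_smul, norm_pow, norm_inv, Complex.norm_natCast]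
      ring
    rw [hnorm]
    calc ‖z - c‖ ^ (n + 1) / (n + 1).factorial * ‖iteratedDeriv (n + 1) F c‖
        ≤ ‖z - c‖ ^ (n + 1) / (n + 1).factorial * (M * σ ^ (n + 1)) := by
          gcongr; exact hbound (n + 1) n.succ_pos
      _ = M * ((σ * ‖z - c‖) ^ (n + 1) / (n + 1).factorial) := by ring
  exact htaylor.norm_le_of_bounded
    ((hasSum_pow_succ_div_factorial (σ * ‖z - c‖)).mul_left M) hterm

theorem Convex.injOn_of_norm_deriv_sub_le {𝕜 F : Type*} [RCLike 𝕜] [NormedAddCommGroup F]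
    [NormedSpace 𝕜 F] {g : 𝕜 → F} {s : Set 𝕜} {a : F} {C : ℝ} (hs : Convex ℝ s)
    (hg : ∀ z ∈ s, DifferentiableAt 𝕜 g z) (hbound : ∀ z ∈ s, ‖deriv g z - a‖ ≤ C)
    (hC : C < ‖a‖) : InjOn g s := by
  have hlin (z : 𝕜) : HasDerivAt (fun u : 𝕜 => u • a) a z := by
    simpa using (hasDerivAt_id z).smul_const a
  have hlip : ∀ z ∈ s, ∀ w ∈ s, ‖(g w - w • a) - (g z - z • a)‖ ≤ C * ‖w - z‖ := by
    intro z hz w hw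
    refine hs.norm_image_sub_le_of_norm_deriv_le (f := fun u => g u - u • a)
      (fun u hu => (hg u hu).sub (hlin u).differentiableAt) (fun u hu => ?_) hz hw
    have hderiv : HasDerivAt (fun u => g u - u • a) (deriv g u - a) u :=
      (hg u hu).hasDerivAt.sub (hlin u)
    rw [hderiv.deriv]
    exact hbound u hu
  intro z hz w hw hzw
  by_contra hne
  have hpos : 0 < ‖w - z‖ := norm_pos_iff.mpr (sub_ne_zero.mpr (Ne.symm hne))
  have hdiff : (g w - w • a) - (g z - z • a) = -((w - z) • a) := by
    rw [hzw, sub_smul]; abel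
  have := hlip z hz w hw
  rw [hdiff, norm_neg, norm_smul, mul_comm] at this
  exact hC.not_ge (le_of_mul_le_mul_right this hpos)

theorem g_injective_on_disk_general
    (f : ℂ → ℂ) (hf : Differentiable ℂ f) (x : ℝ) (A σ α R : ℝ)
    (hA : 0 < A) (hσ : 0 < σ)
    (hderiv : ∀ n : ℕ, 1 ≤ n → ‖iteratedDeriv n f (x : ℂ)‖ ≤ A * σ ^ n)
    (hRbound : R < (1 / σ) * Real.log (1 + ‖(α : ℂ) + deriv f (x : ℂ)‖ / (A * σ))) :
    Set.InjOn (fun z : ℂ => (α : ℂ) * z + f z) (Metric.ball (x : ℂ) R) := by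
  have hAσ : 0 < A * σ := mul_pos hA hσ
  have hderiv' (n : ℕ) (_ : 1 ≤ n) : ‖iteratedDeriv n (deriv f) x‖ ≤ A * σ * σ ^ n := by
    rw [← iteratedDeriv_succ', mul_assoc, ← pow_succ']
    exact hderiv (n + 1) n.succ_pos
  have hg (z : ℂ) : HasDerivAt (fun z : ℂ => (α : ℂ) * z + f z) (α + deriv f z) z := by
    have h := ((hasDerivAt_id' z).const_mul (α : ℂ)).add (hf z).hasDerivAt
    rwa [mul_one] at h
  refine (convex_ball _ _).injOn_of_norm_deriv_sub_le (fun z _ => (hg z).differentiableAt)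
    (fun z hz => ?_) (mul_exp_mul_sub_one_lt_of_lt_log hAσ hσ (norm_nonneg _) hRbound)
  rw [(hg z).deriv, add_sub_add_left_eq_sub]
  calc ‖deriv f z - deriv f x‖ ≤ A * σ * (exp (σ * ‖z - x‖) - 1) :=
        Complex.norm_sub_le_of_norm_iteratedDeriv_le hf.deriv hderiv' z
    _ ≤ A * σ * (exp (σ * R) - 1) := by
        gcongr
        exact (mem_ball_iff_norm.mp hz).le

/-- If `f` is entire with `|f⁽ⁿ⁾(x)| ≤ Aσⁿ` for `n ≥ 1`, `α > Aσ`, and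
`R < (1/σ) log(1 + |α + f'(x)|/(Aσ))`, then `g(z) = αz + f(z)` is injective on
the open disk `D_R(x)`. -/
theorem g_injective_on_disk
    (f : ℂ → ℂ) (hf : Differentiable ℂ f) (x : ℝ) (A σ α R : ℝ)
    (hA : 0 < A) (hσ : 0 < σ)
    (hderiv : ∀ n : ℕ, 1 ≤ n → ‖iteratedDeriv n f (x : ℂ)‖ ≤ A * σ ^ n)
    (hα : A * σ < α) (hR : 0 < R)
    (hRbound : R < (1 / σ) * Real.log (1 + ‖(α : ℂ) + deriv f (x : ℂ)‖ / (A * σ))) :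
    Set.InjOn (fun z : ℂ => (α : ℂ) * z + f z) (Metric.ball (x : ℂ) R) :=
  g_injective_on_disk_general f hf x A σ α R hA hσ hderiv hRbound
end

section
/- Let f : ℝ → ℝ be continuous and Lipschitz with constant B < α for some α > 0, so that g(t) = αt + f(t) is a strictly increasing bijection of ℝ. Define h(u) = g⁻¹(u) − u/α. Then the following duality identities hold: f(t) = −α·h(f(t) + αt) for every t ∈ ℝ, and h(u) = −(1/α)·f(h(u) + u/α) for every u ∈ ℝ. -/
/-!
Writing `g s = α • s + f s`, the equation `g s = u` says that `s` is a fixed point of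
`s ↦ α⁻¹ • (u - f s)`, a contraction with constant `B / ‖α‖ < 1`. By Banach's fixed point
theorem it has exactly one solution, so `g` is bijective and `invFun g` is its inverse. The two
duality identities are `g⁻¹ (g t) = t` and `g (g⁻¹ u) = u` rewritten in terms of `h`.
-/

open Function NNReal

section RampAddition

variable {𝕜 E : Type*} [NormedField 𝕜] [NormedAddCommGroup E] [NormedSpace 𝕜 E]
  {f : E → E} {B : ℝ≥0} {α : 𝕜}

theorem contractingWith_inv_smul_sub (hf : LipschitzWith B f) (hB : (B : ℝ) < ‖α‖) (u : E) :
    ContractingWith (‖α‖₊⁻¹ * B) fun s => α⁻¹ • (u - f s) := by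
  have hα : 0 < ‖α‖₊ := B.coe_nonneg.trans_lt hB
  refine ⟨?_, LipschitzWith.of_dist_le_mul fun s t => ?_⟩
  · rw [inv_mul_lt_iff₀ hα, mul_one]
    exact_mod_cast hB
  · rw [dist_smul₀, dist_sub_left, NNReal.coe_mul, NNReal.coe_inv, coe_nnnorm, norm_inv, mul_assoc]
    gcongr
    exact hf.dist_le_mul s t

theorem isFixedPt_inv_smul_sub_iff (hα : α ≠ 0) (u s : E) :
    IsFixedPt (fun s => α⁻¹ • (u - f s)) s ↔ α • s + f s = u := by
  rw [IsFixedPt, inv_smul_eq_iff₀ hα, sub_eq_iff_eq_add, eq_comm]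

theorem bijective_smul_add_of_lipschitzWith [CompleteSpace E] (hf : LipschitzWith B f)
    (hB : (B : ℝ) < ‖α‖) : Bijective fun s => α • s + f s := by
  have hα : α ≠ 0 := norm_pos_iff.mp (B.coe_nonneg.trans_lt hB)
  refine ⟨fun s t hst => ?_, fun u => ?_⟩
  · have hT := contractingWith_inv_smul_sub hf hB (α • s + f s)
    exact hT.fixedPoint_unique' ((isFixedPt_inv_smul_sub_iff hα _ s).2 rfl)
      ((isFixedPt_inv_smul_sub_iff hα _ t).2 hst.symm)
  · have hT := contractingWith_inv_smul_sub hf hB u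
    exact ⟨_, (isFixedPt_inv_smul_sub_iff hα u _).1 hT.fixedPoint_isFixedPt⟩

end RampAddition

theorem ramp_addition_duality_general
    (f : ℝ → ℝ) (α : ℝ) (B : NNReal) (hB : (B : ℝ) < α)
    (hlip : LipschitzWith B f) :
    (∀ t : ℝ, f t =
        -α * (Function.invFun (fun s : ℝ => α * s + f s) (f t + α * t) -
          (f t + α * t) / α)) ∧
    (∀ u : ℝ,
        Function.invFun (fun s : ℝ => α * s + f s) u - u / α =
          -(1 / α) * f ((Function.invFun (fun s : ℝ => α * s + f s) u - u / α) +
            u / α)) := by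
  have hα : α ≠ 0 := (B.coe_nonneg.trans_lt hB).ne'
  obtain ⟨hinj, hsurj⟩ : Bijective fun s => α * s + f s :=
    bijective_smul_add_of_lipschitzWith (α := α) hlip (hB.trans_le (Real.le_norm_self α))
  refine ⟨fun t => ?_, fun u => ?_⟩
  · rw [add_comm, leftInverse_invFun hinj t]
    field_simp
    ring
  · have hu : α * invFun (fun s => α * s + f s) u + f (invFun (fun s => α * s + f s) u) = u :=
      rightInverse_invFun hsurj u
    rw [sub_add_cancel]
    field_simp
    linear_combination hu

/-- Duality identities for the ramp-addition mapping: with `g(t) = αt + f(t)`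
strictly increasing (since `f` is `B`-Lipschitz with `B < α`) and
`h(u) = g⁻¹(u) − u/α`, one has `f(t) = −α h(f(t) + αt)` and
`h(u) = −(1/α) f(h(u) + u/α)`. -/
theorem ramp_addition_duality
    (f : ℝ → ℝ) (α : ℝ) (B : NNReal) (hα : 0 < α) (hB : (B : ℝ) < α)
    (hf : Continuous f) (hlip : LipschitzWith B f) :
    (∀ t : ℝ, f t =
        -α * (Function.invFun (fun s : ℝ => α * s + f s) (f t + α * t) -
          (f t + α * t) / α)) ∧
    (∀ u : ℝ,
        Function.invFun (fun s : ℝ => α * s + f s) u - u / α =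
          -(1 / α) * f ((Function.invFun (fun s : ℝ => α * s + f s) u - u / α) +
            u / α)) :=
  ramp_addition_duality_general f α B hB hlip
end
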